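/- The first variation of the area element equals the sum of the infinitesimal normal strains times the area element: at every point of U, d/dt at t=0 of ‖R(t)_α × R(t)_β‖ equals (ε̄₁ + ε̄₂)·‖r_α × r_β‖. -/

import Mathlib

noncomputable section

/-- Vectors in ℝ³. -/
abbrev V3 : Type := Fin 3 → ℝ

/-- Euclidean dot product on ℝ³. -/
def dot3 (a b : V3) : ℝ := a 0 * b 0 + a 1 * b 1 + a 2 * b 2

/-- Cross product on ℝ³. -/
def cross3 (a b : V3) : V3 :=
  ![a 1 * b 2 - a 2 * b 1, a 2 * b 0 - a 0 * b 2, a 0 * b 1 - a 1 * b 0]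

/-- Euclidean norm on ℝ³. -/
def norm3 (a : V3) : ℝ := Real.sqrt (dot3 a a)

/-- Partial derivative in the first (α) direction. -/
def pd1 {E : Type*} [NormedAddCommGroup E] [NormedSpace ℝ E]
    (f : ℝ × ℝ → E) (x : ℝ × ℝ) : E := fderiv ℝ f x (1, 0)

/-- Partial derivative in the second (β) direction. -/
def pd2 {E : Type*} [NormedAddCommGroup E] [NormedSpace ℝ E]
    (f : ℝ × ℝ → E) (x : ℝ × ℝ) : E := fderiv ℝ f x (0, 1)

def A₁ (r : ℝ × ℝ → V3) (x : ℝ × ℝ) : ℝ := norm3 (pd1 r x)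
def A₂ (r : ℝ × ℝ → V3) (x : ℝ × ℝ) : ℝ := norm3 (pd2 r x)
def e₁ (r : ℝ × ℝ → V3) (x : ℝ × ℝ) : V3 := (A₁ r x)⁻¹ • pd1 r x
def e₂ (r : ℝ × ℝ → V3) (x : ℝ × ℝ) : V3 := (A₂ r x)⁻¹ • pd2 r x
/-- Unit normal N = e₁ × e₂. -/
def NN (r : ℝ × ℝ → V3) (x : ℝ × ℝ) : V3 := cross3 (e₁ r x) (e₂ r x)
/-- p = (A₁)_β / A₂. -/
def pp (r : ℝ × ℝ → V3) (x : ℝ × ℝ) : ℝ := pd2 (A₁ r) x / A₂ r x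
/-- q = (A₂)_α / A₁. -/
def qq (r : ℝ × ℝ → V3) (x : ℝ × ℝ) : ℝ := pd1 (A₂ r) x / A₁ r x
/-- H∘ = −κ₁ A₁. -/
def Ho (r : ℝ × ℝ → V3) (κ₁ : ℝ × ℝ → ℝ) (x : ℝ × ℝ) : ℝ := -κ₁ x * A₁ r x
/-- K∘ = −κ₂ A₂. -/
def Ko (r : ℝ × ℝ → V3) (κ₂ : ℝ × ℝ → ℝ) (x : ℝ × ℝ) : ℝ := -κ₂ x * A₂ r x

/-- Surface divergence of the tangential field f₁·e₁ + f₂·e₂. -/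
def sdiv (r : ℝ × ℝ → V3) (f₁ f₂ : ℝ × ℝ → ℝ) (x : ℝ × ℝ) : ℝ :=
  (pd1 (fun y => f₁ y * A₂ r y) x + pd2 (fun y => f₂ y * A₁ r y) x) / (A₁ r x * A₂ r x)

/-- Surface gradient ∇f = (f_α/A₁)·e₁ + (f_β/A₂)·e₂. -/
def sgrad (r : ℝ × ℝ → V3) (f : ℝ × ℝ → ℝ) (x : ℝ × ℝ) : V3 :=
  (pd1 f x / A₁ r x) • e₁ r x + (pd2 f x / A₂ r x) • e₂ r x


/-- Variation vector field V = v₁·e₁ + v₂·e₂ + v_n·N. -/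
def Vfield (r : ℝ × ℝ → V3) (v₁ v₂ v_n : ℝ × ℝ → ℝ) (y : ℝ × ℝ) : V3 :=
  v₁ y • e₁ r y + v₂ y • e₂ r y + v_n y • NN r y

/-- The deformed surface R(t) = r + t·V. -/
def Rt (r Vf : ℝ × ℝ → V3) (t : ℝ) (y : ℝ × ℝ) : V3 := r y + t • Vf y

/-- Infinitesimal strain ε̄₁ = ((v₁)_α + p v₂ + H∘ v_n)/A₁. -/
def eps1 (r : ℝ × ℝ → V3) (κ₁ : ℝ × ℝ → ℝ) (v₁ v₂ v_n : ℝ × ℝ → ℝ) (x : ℝ × ℝ) : ℝ :=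
  (pd1 v₁ x + pp r x * v₂ x + Ho r κ₁ x * v_n x) / A₁ r x

/-- Infinitesimal strain ε̄₂ = ((v₂)_β + q v₁ + K∘ v_n)/A₂. -/
def eps2 (r : ℝ × ℝ → V3) (κ₂ : ℝ × ℝ → ℝ) (v₁ v₂ v_n : ℝ × ℝ → ℝ) (x : ℝ × ℝ) : ℝ :=
  (pd2 v₂ x + qq r x * v₁ x + Ko r κ₂ x * v_n x) / A₂ r x

/-- Infinitesimal rotation ϑ̄ = (−(v_n)_α + H∘ v₁)/A₁. -/
def thb (r : ℝ × ℝ → V3) (κ₁ : ℝ × ℝ → ℝ) (v₁ v_n : ℝ × ℝ → ℝ) (x : ℝ × ℝ) : ℝ :=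
  (-(pd1 v_n x) + Ho r κ₁ x * v₁ x) / A₁ r x

/-- Infinitesimal rotation ψ̄ = (−(v_n)_β + K∘ v₂)/A₂. -/
def psb (r : ℝ × ℝ → V3) (κ₂ : ℝ × ℝ → ℝ) (v₂ v_n : ℝ × ℝ → ℝ) (x : ℝ × ℝ) : ℝ :=
  (-(pd2 v_n x) + Ko r κ₂ x * v₂ x) / A₂ r x

/-- Shear ω₁ = (v_α − p u)/A₁. -/
def om1 (r : ℝ × ℝ → V3) (u v : ℝ × ℝ → ℝ) (x : ℝ × ℝ) : ℝ :=
  (pd1 v x - pp r x * u x) / A₁ r x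

/-- Shear ω₂ = (u_β − q v)/A₂. -/
def om2 (r : ℝ × ℝ → V3) (u v : ℝ × ℝ → ℝ) (x : ℝ × ℝ) : ℝ :=
  (pd2 u x - qq r x * v x) / A₂ r x

/-- First fundamental form coefficient E. -/
def EE (R : ℝ × ℝ → V3) (x : ℝ × ℝ) : ℝ := dot3 (pd1 R x) (pd1 R x)
/-- First fundamental form coefficient F. -/
def FF (R : ℝ × ℝ → V3) (x : ℝ × ℝ) : ℝ := dot3 (pd1 R x) (pd2 R x)
/-- First fundamental form coefficient G. -/
def GG (R : ℝ × ℝ → V3) (x : ℝ × ℝ) : ℝ := dot3 (pd2 R x) (pd2 R x)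
/-- Unit normal of a parametrized surface. -/
def unitN (R : ℝ × ℝ → V3) (x : ℝ × ℝ) : V3 :=
  (norm3 (cross3 (pd1 R x) (pd2 R x)))⁻¹ • cross3 (pd1 R x) (pd2 R x)
/-- Second fundamental form coefficient e = N·R_αα. -/
def ee (R : ℝ × ℝ → V3) (x : ℝ × ℝ) : ℝ := dot3 (unitN R x) (pd1 (pd1 R) x)
/-- Second fundamental form coefficient f = N·R_αβ. -/
def ff (R : ℝ × ℝ → V3) (x : ℝ × ℝ) : ℝ := dot3 (unitN R x) (pd2 (pd1 R) x)
/-- Second fundamental form coefficient g = N·R_ββ. -/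
def gg (R : ℝ × ℝ → V3) (x : ℝ × ℝ) : ℝ := dot3 (unitN R x) (pd2 (pd2 R) x)
/-- Mean curvature H = (eG − 2fF + gE)/(2(EG − F²)). -/
def meanH (R : ℝ × ℝ → V3) (x : ℝ × ℝ) : ℝ :=
  (ee R x * GG R x - 2 * ff R x * FF R x + gg R x * EE R x) /
    (2 * (EE R x * GG R x - FF R x ^ 2))
/-- κ̃₁ = −(N_α·R_α)/‖R_α‖². -/
def princ1 (R : ℝ × ℝ → V3) (x : ℝ × ℝ) : ℝ :=
  -(dot3 (pd1 (unitN R) x) (pd1 R x)) / (norm3 (pd1 R x)) ^ 2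
/-- κ̃₂ = −(N_β·R_β)/‖R_β‖². -/
def princ2 (R : ℝ × ℝ → V3) (x : ℝ × ℝ) : ℝ :=
  -(dot3 (pd2 (unitN R) x) (pd2 R x)) / (norm3 (pd2 R x)) ^ 2

/-- Linear Weingarten functional integrand (a·H + b)·dA + (c/3)·R·(R_α × R_β). -/
def Phi (a b c : ℝ) (R : ℝ × ℝ → V3) (x : ℝ × ℝ) : ℝ :=
  (a * meanH R x + b) * norm3 (cross3 (pd1 R x) (pd2 R x)) +
    c / 3 * dot3 (R x) (cross3 (pd1 R x) (pd2 R x))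

section helpers

open Real

lemma dot3_comm (a b : V3) : dot3 a b = dot3 b a := by unfold dot3; ring
lemma dot3_add_right (a b c : V3) : dot3 a (b + c) = dot3 a b + dot3 a c := by
  simp [dot3]; ring
lemma dot3_smul_right (t : ℝ) (a b : V3) : dot3 a (t • b) = t * dot3 a b := by
  simp [dot3]; ring
lemma dot3_self_nonneg (a : V3) : 0 ≤ dot3 a a := by
  unfold dot3; nlinarith [mul_self_nonneg (a 0), mul_self_nonneg (a 1), mul_self_nonneg (a 2)]
lemma dot3_self_pos {a : V3} (h : a ≠ 0) : 0 < dot3 a a := by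
  have h' : a 0 ≠ 0 ∨ a 1 ≠ 0 ∨ a 2 ≠ 0 := by
    by_contra hc
    push_neg at hc
    exact h (funext fun i => by fin_cases i <;> simp [hc.1, hc.2.1, hc.2.2])
  unfold dot3
  rcases h' with h'|h'|h' <;>
    [have := mul_self_pos.mpr h'; have := mul_self_pos.mpr h'; have := mul_self_pos.mpr h'] <;>
    nlinarith [mul_self_nonneg (a 0), mul_self_nonneg (a 1), mul_self_nonneg (a 2)]
lemma lagrange (a b c d : V3) :
    dot3 (cross3 a b) (cross3 c d) = dot3 a c * dot3 b d - dot3 a d * dot3 b c := by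
  simp [dot3, cross3]; ring
lemma cross3_smul_smul (c d : ℝ) (a b : V3) :
    cross3 (c • a) (d • b) = (c * d) • cross3 a b := by
  funext i; fin_cases i <;> simp [cross3] <;> ring
lemma dot3_cross_left (a b : V3) : dot3 a (cross3 a b) = 0 := by simp [dot3, cross3]; ring
lemma dot3_cross_right (a b : V3) : dot3 b (cross3 a b) = 0 := by simp [dot3, cross3]; ring

lemma cdAt_apply3 {f : ℝ×ℝ → V3} {x} (hf : ContDiffAt ℝ (⊤ : ℕ∞) f x) (i : Fin 3) :
    ContDiffAt ℝ (⊤ : ℕ∞) (fun y => f y i) x :=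
  ((ContinuousLinearMap.proj i : V3 →L[ℝ] ℝ).contDiff.contDiffAt).comp x hf
lemma cdAt_dot {f g : ℝ×ℝ → V3} {x} (hf : ContDiffAt ℝ (⊤ : ℕ∞) f x) (hg : ContDiffAt ℝ (⊤ : ℕ∞) g x) :
    ContDiffAt ℝ (⊤ : ℕ∞) (fun y => dot3 (f y) (g y)) x := by
  unfold dot3
  exact (((cdAt_apply3 hf 0).mul (cdAt_apply3 hg 0)).add
    ((cdAt_apply3 hf 1).mul (cdAt_apply3 hg 1))).add
    ((cdAt_apply3 hf 2).mul (cdAt_apply3 hg 2))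
lemma cdAt_cross {f g : ℝ×ℝ → V3} {x} (hf : ContDiffAt ℝ (⊤ : ℕ∞) f x) (hg : ContDiffAt ℝ (⊤ : ℕ∞) g x) :
    ContDiffAt ℝ (⊤ : ℕ∞) (fun y => cross3 (f y) (g y)) x := by
  rw [contDiffAt_pi]
  intro i
  fin_cases i <;> simp only [cross3, Matrix.cons_val_zero, Matrix.cons_val_one,
    Matrix.head_cons, Matrix.cons_val_two, Matrix.tail_cons, Fin.isValue] <;>
    exact ((cdAt_apply3 hf _).mul (cdAt_apply3 hg _)).sub
      ((cdAt_apply3 hf _).mul (cdAt_apply3 hg _))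
lemma cdAt_pd1 {f : ℝ×ℝ → V3} {x} (hf : ContDiffAt ℝ (⊤ : ℕ∞) f x) : ContDiffAt ℝ (⊤ : ℕ∞) (pd1 f) x :=
  (hf.fderiv_right (by simp)).clm_apply contDiffAt_const
lemma cdAt_pd2 {f : ℝ×ℝ → V3} {x} (hf : ContDiffAt ℝ (⊤ : ℕ∞) f x) : ContDiffAt ℝ (⊤ : ℕ∞) (pd2 f) x :=
  (hf.fderiv_right (by simp)).clm_apply contDiffAt_const

section pdw
variable {E : Type*} [NormedAddCommGroup E] [NormedSpace ℝ E]

lemma pdw_add {f g : ℝ×ℝ → E} {x w} (hf : DifferentiableAt ℝ f x) (hg : DifferentiableAt ℝ g x) :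
    fderiv ℝ (fun y => f y + g y) x w = fderiv ℝ f x w + fderiv ℝ g x w := by
  rw [fderiv_fun_add hf hg]; simp

lemma pdw_smul {c : ℝ×ℝ → ℝ} {f : ℝ×ℝ → E} {x w} (hc : DifferentiableAt ℝ c x)
    (hf : DifferentiableAt ℝ f x) :
    fderiv ℝ (fun y => c y • f y) x w = c x • fderiv ℝ f x w + fderiv ℝ c x w • f x := by
  rw [fderiv_fun_smul hc hf]; simp

lemma pdw_const_smul {f : ℝ×ℝ → E} {x w} (t : ℝ) (hf : DifferentiableAt ℝ f x) :
    fderiv ℝ (fun y => t • f y) x w = t • fderiv ℝ f x w := by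
  rw [fderiv_fun_const_smul hf t]; simp

lemma pdw_mul {c g : ℝ×ℝ → ℝ} {x w} (hc : DifferentiableAt ℝ c x) (hg : DifferentiableAt ℝ g x) :
    fderiv ℝ (fun y => c y * g y) x w = c x * fderiv ℝ g x w + fderiv ℝ c x w * g x := by
  rw [fderiv_fun_mul hc hg]; simp; ring

lemma pdw_inv {c : ℝ×ℝ → ℝ} {x w} (hc : DifferentiableAt ℝ c x) (hx : c x ≠ 0) :
    fderiv ℝ (fun y => (c y)⁻¹) x w = -(fderiv ℝ c x w) / (c x)^2 := by
  have h : HasFDerivAt (fun y => (c y)⁻¹) ((-((c x)^2)⁻¹) • fderiv ℝ c x) x :=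
    (hasDerivAt_inv hx).comp_hasFDerivAt x hc.hasFDerivAt
  rw [h.fderiv]; simp; ring
end pdw

lemma pdw_apply3 {f : ℝ×ℝ → V3} {x w} (hf : DifferentiableAt ℝ f x) (i : Fin 3) :
    fderiv ℝ (fun y => f y i) x w = fderiv ℝ f x w i := by
  have h := ((ContinuousLinearMap.proj i : V3 →L[ℝ] ℝ).hasFDerivAt.comp x hf.hasFDerivAt).fderiv
  rw [show (fun y => f y i) = (ContinuousLinearMap.proj i : V3 →L[ℝ] ℝ) ∘ f from rfl, h]
  rfl

lemma pdw_dot {f g : ℝ×ℝ → V3} {x w} (hf : DifferentiableAt ℝ f x) (hg : DifferentiableAt ℝ g x) :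
    fderiv ℝ (fun y => dot3 (f y) (g y)) x w =
      dot3 (fderiv ℝ f x w) (g x) + dot3 (f x) (fderiv ℝ g x w) := by
  have hfi : ∀ i : Fin 3, DifferentiableAt ℝ (fun y => f y i) x := fun i =>
    ((ContinuousLinearMap.proj i : V3 →L[ℝ] ℝ).differentiableAt).comp x hf
  have hgi : ∀ i : Fin 3, DifferentiableAt ℝ (fun y => g y i) x := fun i =>
    ((ContinuousLinearMap.proj i : V3 →L[ℝ] ℝ).differentiableAt).comp x hg
  unfold dot3
  rw [pdw_add (((hfi 0).fun_mul (hgi 0)).fun_add ((hfi 1).fun_mul (hgi 1))) ((hfi 2).fun_mul (hgi 2)),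
    pdw_add ((hfi 0).fun_mul (hgi 0)) ((hfi 1).fun_mul (hgi 1)),
    pdw_mul (hfi 0) (hgi 0), pdw_mul (hfi 1) (hgi 1), pdw_mul (hfi 2) (hgi 2),
    pdw_apply3 hf 0, pdw_apply3 hf 1, pdw_apply3 hf 2,
    pdw_apply3 hg 0, pdw_apply3 hg 1, pdw_apply3 hg 2]
  ring

lemma schwarz {f : ℝ×ℝ → V3} {x} (hf : ContDiffAt ℝ (⊤ : ℕ∞) f x) :
    pd1 (pd2 f) x = pd2 (pd1 f) x := by
  have hsymm := hf.isSymmSndFDerivAt (by rw [minSmoothness_of_isRCLikeNormedField]; exact WithTop.coe_le_coe.mpr (le_top : (2 : ℕ∞) ≤ ⊤))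
  have hdf : DifferentiableAt ℝ (fderiv ℝ f) x :=
    (hf.fderiv_right (m := 1) (by exact WithTop.coe_le_coe.mpr (le_top : (1 + 1 : ℕ∞) ≤ ⊤))).differentiableAt (by simp)
  have h1 : ∀ w v : ℝ×ℝ, fderiv ℝ (fun y => fderiv ℝ f y v) x w =
      fderiv ℝ (fderiv ℝ f) x w v := by
    intro w v
    rw [fderiv_clm_apply hdf (differentiableAt_const v)]
    simp
  unfold pd1 pd2
  rw [h1, h1, hsymm]

lemma cdAt_norm3 {f : ℝ×ℝ → V3} {x} (hf : ContDiffAt ℝ (⊤ : ℕ∞) f x) (hne : f x ≠ 0) :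
    ContDiffAt ℝ (⊤ : ℕ∞) (fun y => norm3 (f y)) x := by
  unfold norm3
  exact (Real.contDiffAt_sqrt (dot3_self_pos hne).ne').comp x (cdAt_dot hf hf)

lemma norm3_deriv {f : ℝ×ℝ → V3} {x w} (hf : ContDiffAt ℝ (⊤ : ℕ∞) f x) (hne : f x ≠ 0) :
    norm3 (f x) * fderiv ℝ (fun y => norm3 (f y)) x w = dot3 (f x) (fderiv ℝ f x w) := by
  have hfd : DifferentiableAt ℝ f x := hf.differentiableAt (by simp)
  have hQd : DifferentiableAt ℝ (fun y => dot3 (f y) (f y)) x :=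
    (cdAt_dot hf hf).differentiableAt (by simp)
  have hpos := dot3_self_pos hne
  have hs : HasFDerivAt (fun y => norm3 (f y))
      ((1 / (2 * Real.sqrt (dot3 (f x) (f x)))) • fderiv ℝ (fun y => dot3 (f y) (f y)) x) x :=
    (Real.hasDerivAt_sqrt hpos.ne').comp_hasFDerivAt x hQd.hasFDerivAt
  rw [hs.fderiv]
  have hQ : fderiv ℝ (fun y => dot3 (f y) (f y)) x w = 2 * dot3 (f x) (fderiv ℝ f x w) := by
    rw [pdw_dot hfd hfd, dot3_comm]; ring
  simp only [ContinuousLinearMap.smul_apply, smul_eq_mul, hQ]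
  have hsq : Real.sqrt (dot3 (f x) (f x)) ≠ 0 := (Real.sqrt_pos.mpr hpos).ne'
  show Real.sqrt (dot3 (f x) (f x)) * _ = _
  field_simp

end helpers

section area

lemma hasDerivAt_line (a a' : V3) (i : Fin 3) :
    HasDerivAt (fun t : ℝ => (a + t • a') i) (a' i) 0 := by
  have h : (fun t : ℝ => (a + t • a') i) = fun t => a i + a' i * t := by
    funext t; simp [mul_comm]
  rw [h]
  simpa using ((hasDerivAt_id (0:ℝ)).const_mul (a' i)).const_add (a i)

lemma deriv_area (a b a' b' : V3) (hab : dot3 (cross3 a b) (cross3 a b) ≠ 0) :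
    deriv (fun t : ℝ => norm3 (cross3 (a + t • a') (b + t • b'))) 0 =
      (dot3 (cross3 a b) (cross3 a' b) + dot3 (cross3 a b) (cross3 a b')) /
        norm3 (cross3 a b) := by
  set P : ℝ → ℝ := fun t =>
    dot3 (cross3 (a + t • a') (b + t • b')) (cross3 (a + t • a') (b + t • b')) with hPdef
  have hu := hasDerivAt_line a a'
  have hw := hasDerivAt_line b b'
  have hc0 : HasDerivAt (fun t : ℝ => (a+t•a') 1 * (b+t•b') 2 - (a+t•a') 2 * (b+t•b') 1)
      (a' 1 * b 2 + a 1 * b' 2 - (a' 2 * b 1 + a 2 * b' 1)) 0 := by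
    simpa using ((hu 1).fun_mul (hw 2)).fun_sub ((hu 2).fun_mul (hw 1))
  have hc1 : HasDerivAt (fun t : ℝ => (a+t•a') 2 * (b+t•b') 0 - (a+t•a') 0 * (b+t•b') 2)
      (a' 2 * b 0 + a 2 * b' 0 - (a' 0 * b 2 + a 0 * b' 2)) 0 := by
    simpa using ((hu 2).fun_mul (hw 0)).fun_sub ((hu 0).fun_mul (hw 2))
  have hc2 : HasDerivAt (fun t : ℝ => (a+t•a') 0 * (b+t•b') 1 - (a+t•a') 1 * (b+t•b') 0)
      (a' 0 * b 1 + a 0 * b' 1 - (a' 1 * b 0 + a 1 * b' 0)) 0 := by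
    simpa using ((hu 0).fun_mul (hw 1)).fun_sub ((hu 1).fun_mul (hw 0))
  have hPeq : P = fun t =>
      ((a+t•a') 1 * (b+t•b') 2 - (a+t•a') 2 * (b+t•b') 1) *
        ((a+t•a') 1 * (b+t•b') 2 - (a+t•a') 2 * (b+t•b') 1) +
      ((a+t•a') 2 * (b+t•b') 0 - (a+t•a') 0 * (b+t•b') 2) *
        ((a+t•a') 2 * (b+t•b') 0 - (a+t•a') 0 * (b+t•b') 2) +
      ((a+t•a') 0 * (b+t•b') 1 - (a+t•a') 1 * (b+t•b') 0) *
        ((a+t•a') 0 * (b+t•b') 1 - (a+t•a') 1 * (b+t•b') 0) := by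
    funext t; simp [hPdef, dot3, cross3]
  have hP0 : P 0 = dot3 (cross3 a b) (cross3 a b) := by
    simp [hPdef]
  have hP : HasDerivAt P
      (((a' 1 * b 2 + a 1 * b' 2 - (a' 2 * b 1 + a 2 * b' 1)) * ((a) 1 * (b) 2 - (a) 2 * (b) 1) +
        ((a) 1 * (b) 2 - (a) 2 * (b) 1) * (a' 1 * b 2 + a 1 * b' 2 - (a' 2 * b 1 + a 2 * b' 1))) +
       ((a' 2 * b 0 + a 2 * b' 0 - (a' 0 * b 2 + a 0 * b' 2)) * ((a) 2 * (b) 0 - (a) 0 * (b) 2) +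
        ((a) 2 * (b) 0 - (a) 0 * (b) 2) * (a' 2 * b 0 + a 2 * b' 0 - (a' 0 * b 2 + a 0 * b' 2))) +
       ((a' 0 * b 1 + a 0 * b' 1 - (a' 1 * b 0 + a 1 * b' 0)) * ((a) 0 * (b) 1 - (a) 1 * (b) 0) +
        ((a) 0 * (b) 1 - (a) 1 * (b) 0) * (a' 0 * b 1 + a 0 * b' 1 - (a' 1 * b 0 + a 1 * b' 0)))) 0 := by
    rw [hPeq]
    have := ((hc0.fun_mul hc0).fun_add (hc1.fun_mul hc1)).fun_add (hc2.fun_mul hc2)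
    simpa using this
  have hP0ne : P 0 ≠ 0 := by rw [hP0]; exact hab
  have hsqrt := (Real.hasDerivAt_sqrt hP0ne).comp 0 hP
  have hder : deriv (fun t : ℝ => norm3 (cross3 (a + t • a') (b + t • b'))) 0 = _ := hsqrt.deriv
  rw [hder]
  have hnorm : norm3 (cross3 a b) = Real.sqrt (P 0) := by rw [hP0]; rfl
  rw [hnorm]
  have hsne : Real.sqrt (P 0) ≠ 0 := by
    rw [hP0]
    exact (Real.sqrt_pos.mpr (lt_of_le_of_ne (dot3_self_nonneg _) (Ne.symm hab))).ne'
  rw [eq_div_iff hsne]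
  field_simp
  simp [dot3, cross3]
  ring

end area

theorem stmt_2
    (U : Set (ℝ × ℝ)) (hU : IsOpen U)
    (r : ℝ × ℝ → V3) (hr : ContDiffOn ℝ (⊤ : ℕ∞) r U)
    (hne1 : ∀ x ∈ U, pd1 r x ≠ 0) (hne2 : ∀ x ∈ U, pd2 r x ≠ 0)
    (horth : ∀ x ∈ U, dot3 (pd1 r x) (pd2 r x) = 0)
    (κ₁ κ₂ : ℝ × ℝ → ℝ) (hκ₁ : ContDiffOn ℝ (⊤ : ℕ∞) κ₁ U) (hκ₂ : ContDiffOn ℝ (⊤ : ℕ∞) κ₂ U)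
    (hN1 : ∀ x ∈ U, pd1 (NN r) x = (-κ₁ x) • pd1 r x)
    (hN2 : ∀ x ∈ U, pd2 (NN r) x = (-κ₂ x) • pd2 r x)
    (v₁ v₂ v_n : ℝ × ℝ → ℝ)
    (hv₁ : ContDiffOn ℝ (⊤ : ℕ∞) v₁ U) (hv₂ : ContDiffOn ℝ (⊤ : ℕ∞) v₂ U) (hvn : ContDiffOn ℝ (⊤ : ℕ∞) v_n U)
 :
    ∀ x ∈ U,
      deriv (fun t => norm3 (cross3 (pd1 (Rt r (Vfield r v₁ v₂ v_n) t) x)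
        (pd2 (Rt r (Vfield r v₁ v₂ v_n) t) x))) 0 =
      (eps1 r κ₁ v₁ v₂ v_n x + eps2 r κ₂ v₁ v₂ v_n x) * norm3 (cross3 (pd1 r x) (pd2 r x)) := by
  intro x hx
  have hmem := hU.mem_nhds hx
  have hrx : ContDiffAt ℝ (⊤ : ℕ∞) r x := (hr x hx).contDiffAt hmem
  have hv1x : ContDiffAt ℝ (⊤ : ℕ∞) v₁ x := (hv₁ x hx).contDiffAt hmem
  have hv2x : ContDiffAt ℝ (⊤ : ℕ∞) v₂ x := (hv₂ x hx).contDiffAt hmem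
  have hvnx : ContDiffAt ℝ (⊤ : ℕ∞) v_n x := (hvn x hx).contDiffAt hmem
  have hv1d := hv1x.differentiableAt (by simp)
  have hv2d := hv2x.differentiableAt (by simp)
  have hvnd := hvnx.differentiableAt (by simp)
  have hrd : DifferentiableAt ℝ r x := hrx.differentiableAt (by simp)
  have hp1 : ContDiffAt ℝ (⊤ : ℕ∞) (pd1 r) x := cdAt_pd1 hrx
  have hp2 : ContDiffAt ℝ (⊤ : ℕ∞) (pd2 r) x := cdAt_pd2 hrx
  have hp1d := hp1.differentiableAt (by simp)
  have hp2d := hp2.differentiableAt (by simp)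
  have ha0 := hne1 x hx
  have hb0 := hne2 x hx
  have hA1pos : 0 < A₁ r x := Real.sqrt_pos.mpr (dot3_self_pos ha0)
  have hA2pos : 0 < A₂ r x := Real.sqrt_pos.mpr (dot3_self_pos hb0)
  have hA1ne : A₁ r x ≠ 0 := hA1pos.ne'
  have hA2ne : A₂ r x ≠ 0 := hA2pos.ne'
  have haa : dot3 (fderiv ℝ r x (1,0)) (fderiv ℝ r x (1,0)) = (A₁ r x)^2 :=
    (Real.sq_sqrt (dot3_self_nonneg _)).symm
  have hbb : dot3 (fderiv ℝ r x (0,1)) (fderiv ℝ r x (0,1)) = (A₂ r x)^2 :=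
    (Real.sq_sqrt (dot3_self_nonneg _)).symm
  have hab : dot3 (fderiv ℝ r x (1,0)) (fderiv ℝ r x (0,1)) = 0 := horth x hx
  have hba : dot3 (fderiv ℝ r x (0,1)) (fderiv ℝ r x (1,0)) = 0 := by
    rw [dot3_comm]; exact hab
  have hA1cd : ContDiffAt ℝ (⊤ : ℕ∞) (A₁ r) x := cdAt_norm3 hp1 ha0
  have hA2cd : ContDiffAt ℝ (⊤ : ℕ∞) (A₂ r) x := cdAt_norm3 hp2 hb0
  have hA1d := hA1cd.differentiableAt (by simp)
  have hA2d := hA2cd.differentiableAt (by simp)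
  have hA1w : ∀ w, A₁ r x * fderiv ℝ (A₁ r) x w =
      dot3 (fderiv ℝ r x (1,0)) (fderiv ℝ (pd1 r) x w) := fun w => norm3_deriv hp1 ha0
  have hA2w : ∀ w, A₂ r x * fderiv ℝ (A₂ r) x w =
      dot3 (fderiv ℝ r x (0,1)) (fderiv ℝ (pd2 r) x w) := fun w => norm3_deriv hp2 hb0
  have he1cd : ContDiffAt ℝ (⊤ : ℕ∞) (e₁ r) x := (hA1cd.inv hA1ne).smul hp1
  have he2cd : ContDiffAt ℝ (⊤ : ℕ∞) (e₂ r) x := (hA2cd.inv hA2ne).smul hp2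
  have he1d := he1cd.differentiableAt (by simp)
  have he2d := he2cd.differentiableAt (by simp)
  have hNcd : ContDiffAt ℝ (⊤ : ℕ∞) (NN r) x := cdAt_cross he1cd he2cd
  have hNd := hNcd.differentiableAt (by simp)
  have hVcd : ContDiffAt ℝ (⊤ : ℕ∞) (Vfield r v₁ v₂ v_n) x :=
    ((hv1x.smul he1cd).add (hv2x.smul he2cd)).add (hvnx.smul hNcd)
  have hVd := hVcd.differentiableAt (by simp)
  -- derivatives of the frame
  have hinv1 : ∀ w, fderiv ℝ (fun y => (A₁ r y)⁻¹) x w =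
      -(fderiv ℝ (A₁ r) x w)/(A₁ r x)^2 := fun w => pdw_inv hA1d hA1ne
  have hinv2 : ∀ w, fderiv ℝ (fun y => (A₂ r y)⁻¹) x w =
      -(fderiv ℝ (A₂ r) x w)/(A₂ r x)^2 := fun w => pdw_inv hA2d hA2ne
  have he1pd : ∀ w, fderiv ℝ (e₁ r) x w =
      (A₁ r x)⁻¹ • fderiv ℝ (pd1 r) x w +
        (fderiv ℝ (fun y => (A₁ r y)⁻¹) x w) • fderiv ℝ r x (1,0) :=
    fun w => pdw_smul (hA1d.inv hA1ne) hp1d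
  have he2pd : ∀ w, fderiv ℝ (e₂ r) x w =
      (A₂ r x)⁻¹ • fderiv ℝ (pd2 r) x w +
        (fderiv ℝ (fun y => (A₂ r y)⁻¹) x w) • fderiv ℝ r x (0,1) :=
    fun w => pdw_smul (hA2d.inv hA2ne) hp2d
  -- dot products with the frame
  have s1 : dot3 (fderiv ℝ r x (1,0)) (e₁ r x) = A₁ r x := by
    show dot3 (fderiv ℝ r x (1,0)) ((A₁ r x)⁻¹ • fderiv ℝ r x (1,0)) = A₁ r x
    rw [dot3_smul_right, haa]
    field_simp
  have s2 : dot3 (fderiv ℝ r x (1,0)) (e₂ r x) = 0 := by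
    show dot3 (fderiv ℝ r x (1,0)) ((A₂ r x)⁻¹ • fderiv ℝ r x (0,1)) = 0
    rw [dot3_smul_right, hab]; ring
  have s1' : dot3 (fderiv ℝ r x (0,1)) (e₂ r x) = A₂ r x := by
    show dot3 (fderiv ℝ r x (0,1)) ((A₂ r x)⁻¹ • fderiv ℝ r x (0,1)) = A₂ r x
    rw [dot3_smul_right, hbb]
    field_simp
  have s2' : dot3 (fderiv ℝ r x (0,1)) (e₁ r x) = 0 := by
    show dot3 (fderiv ℝ r x (0,1)) ((A₁ r x)⁻¹ • fderiv ℝ r x (1,0)) = 0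
    rw [dot3_smul_right, hba]; ring
  have sN : NN r x = ((A₁ r x)⁻¹ * (A₂ r x)⁻¹) •
      cross3 (fderiv ℝ r x (1,0)) (fderiv ℝ r x (0,1)) :=
    cross3_smul_smul _ _ _ _
  have sN1 : dot3 (fderiv ℝ r x (1,0)) (NN r x) = 0 := by
    rw [sN, dot3_smul_right, dot3_cross_left]; ring
  have sN2 : dot3 (fderiv ℝ r x (0,1)) (NN r x) = 0 := by
    rw [sN, dot3_smul_right, dot3_cross_right]; ring
  have hschwarz : fderiv ℝ (pd2 r) x (1,0) = fderiv ℝ (pd1 r) x (0,1) := schwarz hrx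
  have t4 : dot3 (fderiv ℝ r x (1,0)) (fderiv ℝ (e₁ r) x (1,0)) = 0 := by
    rw [he1pd, dot3_add_right, dot3_smul_right, dot3_smul_right, hinv1, haa, ← hA1w (1,0)]
    field_simp
    ring
  have t4' : dot3 (fderiv ℝ r x (0,1)) (fderiv ℝ (e₂ r) x (0,1)) = 0 := by
    rw [he2pd, dot3_add_right, dot3_smul_right, dot3_smul_right, hinv2, hbb, ← hA2w (0,1)]
    field_simp
    ring
  have t5 : dot3 (fderiv ℝ r x (1,0)) (fderiv ℝ (e₂ r) x (1,0)) =
      A₁ r x * (fderiv ℝ (A₁ r) x (0,1) / A₂ r x) := by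
    rw [he2pd, dot3_add_right, dot3_smul_right, dot3_smul_right, hinv2, hab]
    have h : dot3 (fderiv ℝ r x (1,0)) (fderiv ℝ (pd2 r) x (1,0)) =
        A₁ r x * fderiv ℝ (A₁ r) x (0,1) := by
      rw [hschwarz]; exact (hA1w (0,1)).symm
    rw [h]
    field_simp
    ring
  have t5' : dot3 (fderiv ℝ r x (0,1)) (fderiv ℝ (e₁ r) x (0,1)) =
      A₂ r x * (fderiv ℝ (A₂ r) x (1,0) / A₁ r x) := by
    rw [he1pd, dot3_add_right, dot3_smul_right, dot3_smul_right, hinv1, hba]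
    have h : dot3 (fderiv ℝ r x (0,1)) (fderiv ℝ (pd1 r) x (0,1)) =
        A₂ r x * fderiv ℝ (A₂ r) x (1,0) := by
      rw [← hschwarz]; exact (hA2w (1,0)).symm
    rw [h]
    field_simp
    ring
  have t6 : dot3 (fderiv ℝ r x (1,0)) (fderiv ℝ (NN r) x (1,0)) =
      (-κ₁ x * A₁ r x) * A₁ r x := by
    have h : fderiv ℝ (NN r) x (1,0) = (-κ₁ x) • fderiv ℝ r x (1,0) := hN1 x hx
    rw [h, dot3_smul_right, haa]; ring
  have t6' : dot3 (fderiv ℝ r x (0,1)) (fderiv ℝ (NN r) x (0,1)) =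
      (-κ₂ x * A₂ r x) * A₂ r x := by
    have h : fderiv ℝ (NN r) x (0,1) = (-κ₂ x) • fderiv ℝ r x (0,1) := hN2 x hx
    rw [h, dot3_smul_right, hbb]; ring
  -- derivative of the variation field
  have hVpd : ∀ w, fderiv ℝ (Vfield r v₁ v₂ v_n) x w =
      (v₁ x • fderiv ℝ (e₁ r) x w + fderiv ℝ v₁ x w • e₁ r x) +
      (v₂ x • fderiv ℝ (e₂ r) x w + fderiv ℝ v₂ x w • e₂ r x) +
      (v_n x • fderiv ℝ (NN r) x w + fderiv ℝ v_n x w • NN r x) := by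
    intro w
    calc fderiv ℝ (Vfield r v₁ v₂ v_n) x w
        = fderiv ℝ (fun y => (v₁ y • e₁ r y + v₂ y • e₂ r y) + v_n y • NN r y) x w := rfl
      _ = fderiv ℝ (fun y => v₁ y • e₁ r y + v₂ y • e₂ r y) x w +
            fderiv ℝ (fun y => v_n y • NN r y) x w :=
          pdw_add ((hv1d.smul he1d).add (hv2d.smul he2d)) (hvnd.smul hNd)
      _ = (fderiv ℝ (fun y => v₁ y • e₁ r y) x w + fderiv ℝ (fun y => v₂ y • e₂ r y) x w) +
            fderiv ℝ (fun y => v_n y • NN r y) x w := by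
          rw [pdw_add (hv1d.fun_smul he1d) (hv2d.fun_smul he2d)]
      _ = _ := by
          rw [pdw_smul hv1d he1d, pdw_smul hv2d he2d, pdw_smul hvnd hNd]
  have key1 : dot3 (fderiv ℝ r x (1,0)) (fderiv ℝ (Vfield r v₁ v₂ v_n) x (1,0)) =
      A₁ r x * (fderiv ℝ v₁ x (1,0) + (fderiv ℝ (A₁ r) x (0,1) / A₂ r x) * v₂ x +
        (-κ₁ x * A₁ r x) * v_n x) := by
    rw [hVpd (1,0)]
    simp only [dot3_add_right, dot3_smul_right]
    rw [s1, s2, sN1, t4, t5, t6]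
    ring
  have key2 : dot3 (fderiv ℝ r x (0,1)) (fderiv ℝ (Vfield r v₁ v₂ v_n) x (0,1)) =
      A₂ r x * (fderiv ℝ v₂ x (0,1) + (fderiv ℝ (A₂ r) x (1,0) / A₁ r x) * v₁ x +
        (-κ₂ x * A₂ r x) * v_n x) := by
    rw [hVpd (0,1)]
    simp only [dot3_add_right, dot3_smul_right]
    rw [s1', s2', sN2, t4', t5', t6']
    ring
  -- the deformation derivative in t
  have hRt1 : ∀ t : ℝ, fderiv ℝ (Rt r (Vfield r v₁ v₂ v_n) t) x (1,0) =
      fderiv ℝ r x (1,0) + t • fderiv ℝ (Vfield r v₁ v₂ v_n) x (1,0) := by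
    intro t
    show fderiv ℝ (fun y => r y + t • Vfield r v₁ v₂ v_n y) x (1,0) = _
    rw [pdw_add hrd (hVd.fun_const_smul t), pdw_const_smul t hVd]
  have hRt2 : ∀ t : ℝ, fderiv ℝ (Rt r (Vfield r v₁ v₂ v_n) t) x (0,1) =
      fderiv ℝ r x (0,1) + t • fderiv ℝ (Vfield r v₁ v₂ v_n) x (0,1) := by
    intro t
    show fderiv ℝ (fun y => r y + t • Vfield r v₁ v₂ v_n y) x (0,1) = _
    rw [pdw_add hrd (hVd.fun_const_smul t), pdw_const_smul t hVd]
  simp only [eps1, eps2, pp, qq, Ho, Ko, pd1, pd2]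
  have hfun : (fun t : ℝ => norm3 (cross3 (fderiv ℝ (Rt r (Vfield r v₁ v₂ v_n) t) x (1,0))
        (fderiv ℝ (Rt r (Vfield r v₁ v₂ v_n) t) x (0,1)))) =
      fun t : ℝ => norm3 (cross3
        (fderiv ℝ r x (1,0) + t • fderiv ℝ (Vfield r v₁ v₂ v_n) x (1,0))
        (fderiv ℝ r x (0,1) + t • fderiv ℝ (Vfield r v₁ v₂ v_n) x (0,1))) := by
    funext t; rw [hRt1 t, hRt2 t]
  rw [hfun]
  have hcc : dot3 (cross3 (fderiv ℝ r x (1,0)) (fderiv ℝ r x (0,1)))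
      (cross3 (fderiv ℝ r x (1,0)) (fderiv ℝ r x (0,1))) ≠ 0 := by
    rw [lagrange, haa, hbb, hab, hba]
    have : (A₁ r x)^2 * (A₂ r x)^2 - 0 * 0 = (A₁ r x * A₂ r x)^2 := by ring
    rw [this]
    positivity
  rw [deriv_area _ _ _ _ hcc]
  have hnorm : norm3 (cross3 (fderiv ℝ r x (1,0)) (fderiv ℝ r x (0,1))) =
      A₁ r x * A₂ r x := by
    have h : dot3 (cross3 (fderiv ℝ r x (1,0)) (fderiv ℝ r x (0,1)))
        (cross3 (fderiv ℝ r x (1,0)) (fderiv ℝ r x (0,1))) = (A₁ r x * A₂ r x)^2 := by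
      rw [lagrange, haa, hbb, hab, hba]; ring
    show Real.sqrt _ = _
    rw [h, Real.sqrt_sq (by positivity)]
  have hl1 : dot3 (cross3 (fderiv ℝ r x (1,0)) (fderiv ℝ r x (0,1)))
      (cross3 (fderiv ℝ (Vfield r v₁ v₂ v_n) x (1,0)) (fderiv ℝ r x (0,1))) =
      dot3 (fderiv ℝ r x (1,0)) (fderiv ℝ (Vfield r v₁ v₂ v_n) x (1,0)) * (A₂ r x)^2 := by
    rw [lagrange, hbb, hab]
    ring
  have hl2 : dot3 (cross3 (fderiv ℝ r x (1,0)) (fderiv ℝ r x (0,1)))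
      (cross3 (fderiv ℝ r x (1,0)) (fderiv ℝ (Vfield r v₁ v₂ v_n) x (0,1))) =
      (A₁ r x)^2 * dot3 (fderiv ℝ r x (0,1)) (fderiv ℝ (Vfield r v₁ v₂ v_n) x (0,1)) := by
    rw [lagrange, haa, hba]
    ring
  rw [hl1, hl2, key1, key2, hnorm]
  field_simp
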